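/- Let R be a UFD and f ∈ R a nonzero non-unit prime element, S = R[u,v]/(uv - f). If g ∈ S is irreducible and not divisible by u, and l is the smallest non-negative integer such that u^l g lies in the subring R[u] of S, then u^l g is a prime element of R[u]. -/

import Mathlib

/-!
Sending `u ↦ T`, `v ↦ f T⁻¹` embeds `S` into `R[T, T⁻¹]`: every element of `S` is `a(u) + b(v)`
with `b(0) = 0`, and its image `∑ aₙ Tⁿ + ∑ fⁿ bₙ T⁻ⁿ` determines `a` and `b`. Hence `S` is a
domain, `u` is prime in `S` because `S ⧸ (u) ≅ (R ⧸ (f))[v]`, and every nonzero `s ∈ S` is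
`uⁱ t` with `u ∤ t`, since the coefficient of `T⁻ⁿ` in the image of an element of `S` is
divisible by `fⁿ`.

Let `H ∈ R[X]` with `H(u) = uˡ g`. Minimality of `l` forces `H(0) ≠ 0`. If `H = P Q`, write
`P(u) = uⁱ p` and `Q(u) = uʲ q` with `u ∤ p, q`; comparing with `uˡ g` gives `g = p q`, so `p`,
say, is a unit. Then `P` becomes a unit in `R[T, T⁻¹] = R[X]_X`, so `P` divides a power of `X`,
and `P(0) ≠ 0` makes it a unit. Thus `H` is irreducible, hence prime in the UFD `R[X] ≅ R[u]`.
-/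

open MvPolynomial

/-- The suspension ring `S = R[u,v]/(uv - f)`. -/
abbrev Susp (R : Type*) [CommRing R] (f : R) : Type _ :=
  MvPolynomial (Fin 2) R ⧸
    Ideal.span {(X 0 * X 1 - C f : MvPolynomial (Fin 2) R)}

/-- The image of the variable `u` in `S`. -/
noncomputable abbrev suspU (R : Type*) [CommRing R] (f : R) : Susp R f :=
  Ideal.Quotient.mk _ (X 0)

/-- The image of the variable `v` in `S`. -/
noncomputable abbrev suspV (R : Type*) [CommRing R] (f : R) : Susp R f :=
  Ideal.Quotient.mk _ (X 1)

open scoped Polynomial LaurentPolynomial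
open Polynomial (aeval)
open LaurentPolynomial (T)

theorem eq_of_pow_mul_eq_pow_mul_of_not_dvd {M : Type*} [CommMonoidWithZero M]
    [IsCancelMulZero M] {p x y : M} {a b : ℕ} (hp : p ≠ 0) (hx : ¬ p ∣ x) (hy : ¬ p ∣ y)
    (h : p ^ a * x = p ^ b * y) : x = y := by
  wlog hab : a ≤ b generalizing a b x y
  · exact (this hy hx h.symm (le_of_not_ge hab)).symm
  obtain ⟨c, rfl⟩ := Nat.exists_eq_add_of_le hab
  rw [pow_add, mul_assoc] at h
  obtain rfl := mul_left_cancel₀ (pow_ne_zero a hp) h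
  cases c with
  | zero => simp
  | succ c => exact absurd (dvd_mul_of_dvd_left (dvd_pow_self p c.succ_ne_zero) y) hx

section LaurentCoefficients

variable {R : Type*} [CommRing R]

theorem Polynomial.coeff_toLaurent_natCast (a : R[X]) (n : ℕ) :
    (Polynomial.toLaurent a).coeff n = a.coeff n := by
  rw [LaurentPolynomial.coeff_toLaurent]
  exact Finsupp.mapDomain_apply Nat.castEmbedding.injective _ n

theorem Polynomial.coeff_toLaurent_of_neg (a : R[X]) {k : ℤ} (hk : k < 0) :
    (Polynomial.toLaurent a).coeff k = 0 := by
  rw [LaurentPolynomial.coeff_toLaurent]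
  refine Finsupp.mapDomain_of_notMem_range _ _ ?_
  rintro ⟨m, rfl⟩
  simp at hk
  omega

theorem LaurentPolynomial.coeff_T_mul (n : ℤ) (p : R[T;T⁻¹]) (k : ℤ) :
    (T n * p).coeff k = p.coeff (k - n) := by
  rw [show (T n : R[T;T⁻¹]) = AddMonoidAlgebra.single n 1 from rfl,
    AddMonoidAlgebra.coeff_single_mul_apply, one_mul, neg_add_eq_sub]

theorem LaurentPolynomial.aeval_C_mul_T_neg_one_monomial (f : R) (m : ℕ) (r : R) :
    aeval (C f * T (-1)) (Polynomial.monomial m r) = C (r * f ^ m) * T (-m) := by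
  rw [Polynomial.aeval_monomial, mul_pow, T_pow, ← map_pow, algebraMap_apply, ← mul_assoc,
    ← map_mul]
  simp

theorem LaurentPolynomial.coeff_aeval_C_mul_T_neg_one_neg (f : R) (b : R[X]) (n : ℕ) :
    (aeval (C f * T (-1)) b).coeff (-n) = f ^ n * b.coeff n := by
  induction b using Polynomial.induction_on' with
  | add p q hp hq =>
    simp only [map_add, AddMonoidAlgebra.coeff_add, Finsupp.add_apply, hp, hq,
      Polynomial.coeff_add, mul_add]
  | monomial m r =>
    rw [aeval_C_mul_T_neg_one_monomial, ← single_eq_C_mul_T, AddMonoidAlgebra.coeff_single,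
      Finsupp.single_apply, Polynomial.coeff_monomial]
    by_cases h : m = n
    · simp [h, mul_comm]
    · simp [h]

theorem LaurentPolynomial.coeff_aeval_C_mul_T_neg_one_of_pos (f : R) (b : R[X]) {k : ℤ}
    (hk : 0 < k) : (aeval (C f * T (-1)) b).coeff k = 0 := by
  induction b using Polynomial.induction_on' with
  | add p q hp hq =>
    simp only [map_add, AddMonoidAlgebra.coeff_add, Finsupp.add_apply, hp, hq, add_zero]
  | monomial m r =>
    rw [aeval_C_mul_T_neg_one_monomial, ← single_eq_C_mul_T, AddMonoidAlgebra.coeff_single,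
      Finsupp.single_apply, if_neg (by omega)]

end LaurentCoefficients

namespace Susp

variable {R : Type*} [CommRing R] {f : R}

theorem suspU_mul_suspV : suspU R f * suspV R f = algebraMap R (Susp R f) f := by
  rw [← sub_eq_zero, ← map_mul, ← Ideal.Quotient.mk_algebraMap, ← map_sub,
    Ideal.Quotient.eq_zero_iff_mem]
  exact Ideal.subset_span rfl

theorem suspU_pow_mul_suspV_pow_of_le {i j : ℕ} (h : i ≤ j) :
    suspU R f ^ i * suspV R f ^ j = algebraMap R (Susp R f) (f ^ i) * suspV R f ^ (j - i) := by
  obtain ⟨k, rfl⟩ := Nat.exists_eq_add_of_le h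
  rw [pow_add, ← mul_assoc, ← mul_pow, suspU_mul_suspV, map_pow, Nat.add_sub_cancel_left]

theorem suspU_pow_mul_suspV_pow_of_ge {i j : ℕ} (h : j ≤ i) :
    suspU R f ^ i * suspV R f ^ j = algebraMap R (Susp R f) (f ^ j) * suspU R f ^ (i - j) := by
  obtain ⟨k, rfl⟩ := Nat.exists_eq_add_of_le h
  rw [pow_add, mul_right_comm, ← mul_pow, suspU_mul_suspV, map_pow, Nat.add_sub_cancel_left]

theorem exists_eq_aeval_suspU_add_aeval_suspV (s : Susp R f) :
    ∃ a b : R[X], s = aeval (suspU R f) a + aeval (suspV R f) b := by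
  obtain ⟨P, rfl⟩ := Ideal.Quotient.mk_surjective s
  induction P using MvPolynomial.induction_on' with
  | monomial e r =>
    have he : Ideal.Quotient.mk _ (monomial e r) =
        algebraMap R (Susp R f) r * (suspU R f ^ e 0 * suspV R f ^ e 1) := by
      simp [MvPolynomial.monomial_eq, Finsupp.prod_fintype, Fin.prod_univ_two]
      rfl
    rcases le_total (e 0) (e 1) with h | h
    · refine ⟨0, Polynomial.monomial (e 1 - e 0) (r * f ^ e 0), ?_⟩
      rw [he, suspU_pow_mul_suspV_pow_of_le h, Polynomial.aeval_zero, zero_add,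
        Polynomial.aeval_monomial, map_mul, mul_assoc]
    · refine ⟨Polynomial.monomial (e 0 - e 1) (r * f ^ e 1), 0, ?_⟩
      rw [he, suspU_pow_mul_suspV_pow_of_ge h, Polynomial.aeval_zero, add_zero,
        Polynomial.aeval_monomial, map_mul, mul_assoc]
  | add p q hp hq =>
    obtain ⟨a, b, hab⟩ := hp
    obtain ⟨a', b', hab'⟩ := hq
    exact ⟨a + a', b + b', by rw [map_add, hab, hab', map_add, map_add]; ring⟩

theorem exists_normal_form (s : Susp R f) :
    ∃ a b : R[X], b.coeff 0 = 0 ∧ s = aeval (suspU R f) a + aeval (suspV R f) b := by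
  obtain ⟨a, b, rfl⟩ := exists_eq_aeval_suspU_add_aeval_suspV s
  refine ⟨a + Polynomial.C (b.coeff 0), b - Polynomial.C (b.coeff 0), by simp, ?_⟩
  simp only [map_add, map_sub, Polynomial.aeval_C]
  ring

variable (f) in
noncomputable def toLaurent : Susp R f →ₐ[R] R[T;T⁻¹] :=
  Ideal.Quotient.liftₐ _ (MvPolynomial.aeval ![T 1, LaurentPolynomial.C f * T (-1)]) <| by
    intro a ha
    obtain ⟨c, rfl⟩ := Ideal.mem_span_singleton'.mp ha
    have hT : (T 1 : R[T;T⁻¹]) * (LaurentPolynomial.C f * T (-1)) = LaurentPolynomial.C f := by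
      rw [mul_left_comm, ← LaurentPolynomial.T_add, add_neg_cancel, LaurentPolynomial.T_zero,
        mul_one]
    simp only [map_mul, map_sub, MvPolynomial.aeval_X, MvPolynomial.aeval_C,
      Matrix.cons_val_zero, Matrix.cons_val_one, hT, ← LaurentPolynomial.C_eq_algebraMap,
      sub_self, mul_zero]

@[simp]
theorem toLaurent_suspU : toLaurent f (suspU R f) = T 1 :=
  MvPolynomial.aeval_X _ 0

@[simp]
theorem toLaurent_suspV : toLaurent f (suspV R f) = LaurentPolynomial.C f * T (-1) :=
  MvPolynomial.aeval_X _ 1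

theorem toLaurent_aeval_suspU (a : R[X]) :
    toLaurent f (aeval (suspU R f) a) = Polynomial.toLaurent a := by
  rw [← Polynomial.aeval_algHom_apply, toLaurent_suspU, ← Polynomial.toLaurent_X,
    ← Polynomial.coe_toLaurentAlg, Polynomial.aeval_algHom_apply, Polynomial.aeval_X_left_apply]

theorem toLaurent_aeval_suspV (b : R[X]) :
    toLaurent f (aeval (suspV R f) b) = aeval (LaurentPolynomial.C f * T (-1)) b := by
  rw [← Polynomial.aeval_algHom_apply, toLaurent_suspV]

theorem injective_aeval_suspU : Function.Injective (Polynomial.aeval (R := R) (suspU R f)) := by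
  refine Function.Injective.of_comp (f := toLaurent f) ?_
  convert Polynomial.toLaurent_injective (R := R) using 1
  exact funext toLaurent_aeval_suspU

theorem suspU_ne_zero [Nontrivial R] : suspU R f ≠ 0 := by
  intro h
  have := congrArg (toLaurent f) h
  rw [toLaurent_suspU, map_zero] at this
  exact (LaurentPolynomial.isUnit_T 1).ne_zero this

theorem pow_dvd_coeff_toLaurent_neg (s : Susp R f) (n : ℕ) :
    f ^ n ∣ (toLaurent f s).coeff (-n) := by
  obtain ⟨a, b, hb, rfl⟩ := exists_normal_form s
  rcases Nat.eq_zero_or_pos n with rfl | hn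
  · simp
  · rw [map_add, toLaurent_aeval_suspU, toLaurent_aeval_suspV, AddMonoidAlgebra.coeff_add,
      Finsupp.add_apply, Polynomial.coeff_toLaurent_of_neg a (by omega),
      LaurentPolynomial.coeff_aeval_C_mul_T_neg_one_neg, zero_add]
    exact dvd_mul_right _ _

variable (f) in
noncomputable def modSuspU : Susp R f →+* (R ⧸ Ideal.span {f})[X] :=
  Ideal.Quotient.lift _
    (eval₂Hom (Polynomial.C.comp (Ideal.Quotient.mk _)) ![0, Polynomial.X]) <| by
    intro a ha
    obtain ⟨c, rfl⟩ := Ideal.mem_span_singleton'.mp ha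
    have hf : Ideal.Quotient.mk (Ideal.span {f}) f = 0 :=
      Ideal.Quotient.eq_zero_iff_mem.mpr (Ideal.mem_span_singleton_self f)
    simp [hf]

theorem modSuspU_comp_algebraMap :
    (modSuspU f).comp (algebraMap R (Susp R f)) = Polynomial.C.comp (Ideal.Quotient.mk _) :=
  RingHom.ext fun _ ↦ eval₂_C _ _ _

theorem modSuspU_aeval_suspU (a : R[X]) :
    modSuspU f (aeval (suspU R f) a) = Polynomial.C (Ideal.Quotient.mk _ (a.coeff 0)) := by
  rw [Polynomial.aeval_def, Polynomial.hom_eval₂, modSuspU_comp_algebraMap,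
    show modSuspU f (suspU R f) = 0 from eval₂_X _ _ 0, Polynomial.eval₂_at_zero,
    RingHom.comp_apply]

theorem modSuspU_aeval_suspV (b : R[X]) :
    modSuspU f (aeval (suspV R f) b) = b.map (Ideal.Quotient.mk _) := by
  rw [Polynomial.aeval_def, Polynomial.hom_eval₂, modSuspU_comp_algebraMap,
    show modSuspU f (suspV R f) = Polynomial.X from eval₂_X _ _ 1, ← Polynomial.map]

theorem ker_modSuspU : RingHom.ker (modSuspU f) = Ideal.span {suspU R f} := by
  refine le_antisymm (fun s hs ↦ ?_) ?_
  · obtain ⟨a, b, hb, rfl⟩ := exists_normal_form s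
    rw [RingHom.mem_ker, map_add, modSuspU_aeval_suspU, modSuspU_aeval_suspV] at hs
    have ha : f ∣ a.coeff 0 := by
      simpa [hb, Ideal.Quotient.eq_zero_iff_mem, Ideal.mem_span_singleton]
        using congrArg (Polynomial.coeff · 0) hs
    have hb : Polynomial.C f ∣ b := (Polynomial.C_dvd_iff_dvd_coeff f b).mpr fun n ↦ by
      simpa [(Ideal.Quotient.eq_zero_iff_mem).mpr (Ideal.mem_span_singleton.mpr ha),
        Ideal.Quotient.eq_zero_iff_mem, Ideal.mem_span_singleton]
        using congrArg (Polynomial.coeff · n) hs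
    have hu : suspU R f ∣ algebraMap R (Susp R f) f := ⟨suspV R f, suspU_mul_suspV.symm⟩
    have h₁ : suspU R f ∣ aeval (suspU R f) a - algebraMap R _ (a.coeff 0) := by
      simpa using map_dvd (Polynomial.aeval (suspU R f)) (Polynomial.X_dvd_sub_C (p := a))
    have h₂ : suspU R f ∣ algebraMap R _ (a.coeff 0) := hu.trans (map_dvd _ ha)
    have h₃ : suspU R f ∣ aeval (suspV R f) b :=
      hu.trans (by simpa using map_dvd (Polynomial.aeval (suspV R f)) hb)
    simpa using Ideal.mem_span_singleton.mpr ((h₁.add h₂).add h₃)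
  · rw [Ideal.span_le, Set.singleton_subset_iff, SetLike.mem_coe, RingHom.mem_ker]
    simpa using modSuspU_aeval_suspU (f := f) Polynomial.X

variable [IsDomain R]

theorem toLaurent_injective (hf : f ≠ 0) : Function.Injective (toLaurent f) := by
  rw [injective_iff_map_eq_zero]
  intro s hs
  obtain ⟨a, b, hb, rfl⟩ := exists_normal_form s
  rw [map_add, toLaurent_aeval_suspU, toLaurent_aeval_suspV] at hs
  have hcoeff (k : ℤ) : (Polynomial.toLaurent a).coeff k +
      (aeval (LaurentPolynomial.C f * T (-1)) b).coeff k = 0 := by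
    rw [← Finsupp.add_apply, ← AddMonoidAlgebra.coeff_add, hs]
    rfl
  have hb0 : b = 0 := by
    ext n
    rcases Nat.eq_zero_or_pos n with rfl | hn
    · exact hb
    · have := hcoeff (-n)
      rw [Polynomial.coeff_toLaurent_of_neg a (by omega),
        LaurentPolynomial.coeff_aeval_C_mul_T_neg_one_neg, zero_add] at this
      exact (mul_eq_zero.mp this).resolve_left (pow_ne_zero n hf)
  subst hb0
  rw [map_zero, add_zero, Polynomial.toLaurent_eq_zero] at hs
  simp [hs]

theorem isDomain (hf : f ≠ 0) : IsDomain (Susp R f) :=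
  (toLaurent_injective hf).isDomain (toLaurent f).toRingHom

theorem prime_suspU (hf : Prime f) : Prime (suspU R f) := by
  have := isDomain hf.ne_zero
  have : (Ideal.span {f}).IsPrime := (Ideal.span_singleton_prime hf.ne_zero).mpr hf
  rw [← Ideal.span_singleton_prime suspU_ne_zero, ← ker_modSuspU]
  exact RingHom.ker_isPrime _

theorem finiteMultiplicity_suspU [WfDvdMonoid R] (hf : Prime f) {s : Susp R f} (hs : s ≠ 0) :
    FiniteMultiplicity (suspU R f) s := by
  obtain ⟨k, hk⟩ : ∃ k, (toLaurent f s).coeff k ≠ 0 := by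
    by_contra! h
    refine hs (toLaurent_injective hf.ne_zero ?_)
    ext k
    simp [h]
  obtain ⟨M, hM⟩ := FiniteMultiplicity.of_prime_left hf hk
  -- `u ^ N ∣ s` would make `f ^ (N - k)` divide the nonzero coefficient of `T ^ k`
  refine ⟨M + k.toNat, ?_⟩
  rintro ⟨t, rfl⟩
  rw [map_mul, map_pow, toLaurent_suspU, LaurentPolynomial.T_pow, mul_one,
    LaurentPolynomial.coeff_T_mul] at hM
  set m := (M + k.toNat + 1 - k).toNat
  rw [show k - (M + k.toNat + 1 : ℕ) = -m by omega] at hM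
  exact hM ((pow_dvd_pow f (by omega)).trans (pow_dvd_coeff_toLaurent_neg t m))

theorem isUnit_of_aeval_suspU_eq_pow_mul {P : R[X]} (hP : P.coeff 0 ≠ 0) {i : ℕ}
    {w : Susp R f} (hw : IsUnit w) (h : aeval (suspU R f) P = suspU R f ^ i * w) : IsUnit P := by
  have hunit : IsUnit (algebraMap R[X] R[T;T⁻¹] P) := by
    rw [LaurentPolynomial.algebraMap_eq_toLaurent, ← toLaurent_aeval_suspU (f := f), h, map_mul,
      map_pow, toLaurent_suspU]
    exact ((LaurentPolynomial.isUnit_T 1).pow i).mul (hw.map _)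
  obtain ⟨n, hn⟩ := (IsLocalization.Away.algebraMap_isUnit_iff Polynomial.X).mp hunit
  obtain ⟨j, -, hj⟩ := (dvd_prime_pow Polynomial.prime_X n).mp hn
  cases j with
  | zero => simpa using hj
  | succ j =>
    exact absurd (Polynomial.X_dvd_iff.mp ((dvd_pow_self _ j.succ_ne_zero).trans hj.dvd')) hP

theorem irreducible_of_aeval_suspU_eq_pow_mul [WfDvdMonoid R] (hf : Prime f)
    {g : Susp R f} (hg : Irreducible g) (hug : ¬ suspU R f ∣ g) {H : R[X]} (hH0 : H.coeff 0 ≠ 0)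
    {l : ℕ} (hH : aeval (suspU R f) H = suspU R f ^ l * g) : Irreducible H := by
  have := isDomain hf.ne_zero
  refine ⟨fun hunit ↦ hg.not_isUnit (isUnit_of_mul_isUnit_right (hH ▸ hunit.map _)), ?_⟩
  intro P Q hPQ
  rw [hPQ, Polynomial.mul_coeff_zero] at hH0
  have hsplit {P : R[X]} (hP0 : P.coeff 0 ≠ 0) :
      ∃ i p, aeval (suspU R f) P = suspU R f ^ i * p ∧ ¬ suspU R f ∣ p := by
    have hP : aeval (suspU R f) P ≠ 0 := fun h ↦
      hP0 (by rw [injective_aeval_suspU (h.trans (map_zero _).symm), Polynomial.coeff_zero])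
    exact ⟨_, (finiteMultiplicity_suspU hf hP).exists_eq_pow_mul_and_not_dvd⟩
  obtain ⟨i, p, hp, hup⟩ := hsplit (left_ne_zero_of_mul hH0)
  obtain ⟨j, q, hq, huq⟩ := hsplit (right_ne_zero_of_mul hH0)
  have hgpq : g = p * q := by
    refine eq_of_pow_mul_eq_pow_mul_of_not_dvd (a := l) (b := i + j) suspU_ne_zero hug
      ((prime_suspU hf).not_dvd_mul hup huq) ?_
    rw [← hH, hPQ, map_mul, hp, hq, pow_add]
    ring
  exact (hg.isUnit_or_isUnit hgpq).imp
    (isUnit_of_aeval_suspU_eq_pow_mul (left_ne_zero_of_mul hH0) · hp)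
    (isUnit_of_aeval_suspU_eq_pow_mul (right_ne_zero_of_mul hH0) · hq)

end Susp

theorem pow_mul_prime_in_polynomial_subring_general (R : Type*) [CommRing R] [IsDomain R]
    [UniqueFactorizationMonoid R] (f : R)
    (hfp : Prime f) (g : Susp R f) (hg : Irreducible g)
    (hug : ¬ suspU R f ∣ g) (l : ℕ)
    (hl : (suspU R f) ^ l * g ∈ Algebra.adjoin R {suspU R f})
    (hmin : ∀ k < l, (suspU R f) ^ k * g ∉ Algebra.adjoin R {suspU R f}) :
    Prime (⟨(suspU R f) ^ l * g, hl⟩ : Algebra.adjoin R {suspU R f}) := by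
  have := Susp.isDomain hfp.ne_zero
  let e := Polynomial.algEquivOfTranscendental R (suspU R f)
    (transcendental_iff_injective.mpr Susp.injective_aeval_suspU)
  have he (P : R[X]) : (e P : Susp R f) = aeval (suspU R f) P := by simp [e]
  set H := e.symm ⟨_, hl⟩
  have hH : aeval (suspU R f) H = suspU R f ^ l * g := by rw [← he, e.apply_symm_apply]
  have hH0 : H.coeff 0 ≠ 0 := by
    intro h0
    obtain ⟨H', hH'⟩ := Polynomial.X_dvd_iff.mpr h0
    rw [hH', map_mul, Polynomial.aeval_X] at hH
    cases l with
    | zero => exact hug ⟨_, by simpa using hH.symm⟩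
    | succ k =>
      refine hmin k k.lt_succ_self ?_
      rw [pow_succ', mul_assoc] at hH
      rw [← mul_left_cancel₀ Susp.suspU_ne_zero hH, ← he]
      exact (e H').2
  rw [← e.apply_symm_apply ⟨_, hl⟩, MulEquiv.prime_iff]
  exact UniqueFactorizationMonoid.irreducible_iff_prime.mp
    (Susp.irreducible_of_aeval_suspU_eq_pow_mul hfp hg hug hH0 hH)

/-- Let `R` be a UFD, `f ∈ R` a nonzero non-unit prime, and `S = R[u,v]/(uv - f)`.
If `g ∈ S` is irreducible, not divisible by `u`, and `l` is the smallest
non-negative integer with `u^l g` in the subring `R[u] ⊆ S`, then `u^l g` is a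
prime element of `R[u]`. -/
theorem pow_mul_prime_in_polynomial_subring (R : Type*) [CommRing R] [IsDomain R]
    [UniqueFactorizationMonoid R] (f : R) (hf0 : f ≠ 0) (hfu : ¬ IsUnit f)
    (hfp : Prime f) (g : Susp R f) (hg : Irreducible g)
    (hug : ¬ suspU R f ∣ g) (l : ℕ)
    (hl : (suspU R f) ^ l * g ∈ Algebra.adjoin R {suspU R f})
    (hmin : ∀ k < l, (suspU R f) ^ k * g ∉ Algebra.adjoin R {suspU R f}) :
    Prime (⟨(suspU R f) ^ l * g, hl⟩ : Algebra.adjoin R {suspU R f}) :=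
  pow_mul_prime_in_polynomial_subring_general R f hfp g hg hug l hl hmin
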